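/- If f and g are left slice hyperholomorphic functions on an axially symmetric slice domain U ⊂ ℍ (with U connected and intersecting ℝ) and D(f - g) = 0 on U, where D is the Cauchy-Fueter operator, then f - g is constant on U. -/

import Mathlib

open scoped Quaternion

/-- Directional derivative of `f : ℍ → ℍ` in the direction `a`. -/
noncomputable def pd (a : ℍ[ℝ]) (f : ℍ[ℝ] → ℍ[ℝ]) : ℍ[ℝ] → ℍ[ℝ] :=
  fun q => fderiv ℝ f q a

def e1 : ℍ[ℝ] := ⟨0, 1, 0, 0⟩
def e2 : ℍ[ℝ] := ⟨0, 0, 1, 0⟩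
def e3 : ℍ[ℝ] := ⟨0, 0, 0, 1⟩

/-- The Cauchy-Fueter operator `D = ∂_{q₀} + e₁∂_{q₁} + e₂∂_{q₂} + e₃∂_{q₃}`. -/
noncomputable def Dop (f : ℍ[ℝ] → ℍ[ℝ]) : ℍ[ℝ] → ℍ[ℝ] :=
  fun q => pd 1 f q + e1 * pd e1 f q + e2 * pd e2 f q + e3 * pd e3 f q

/-- The Laplacian in four real variables. -/
noncomputable def Lap (f : ℍ[ℝ] → ℍ[ℝ]) : ℍ[ℝ] → ℍ[ℝ] :=
  fun q => pd 1 (pd 1 f) q + pd e1 (pd e1 f) q + pd e2 (pd e2 f) q + pd e3 (pd e3 f) q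

/-- Left slice hyperholomorphic function on `U`. -/
def IsSliceHyp (U : Set ℍ[ℝ]) (f : ℍ[ℝ] → ℍ[ℝ]) : Prop :=
  ∃ α β : ℝ → ℝ → ℍ[ℝ],
    (∀ u v : ℝ, α u (-v) = α u v ∧ β u (-v) = -β u v) ∧
    (∀ u v : ℝ,
      HasDerivAt (fun u' => α u' v) (deriv (fun v' => β u v') v) u ∧
      HasDerivAt (fun u' => β u' v) (-(deriv (fun v' => α u v') v)) u) ∧
    (∀ q ∈ U, ∀ J : ℍ[ℝ], J.re = 0 → ‖J‖ = 1 → ∀ u v : ℝ,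
      q = (u : ℍ[ℝ]) + v • J → f q = α u v + J * β u v)

/-!
On the slice through `u + vJ` (`v > 0`) the derivative of `f = α + Jβ` is determined by `β`:
in the directions `1` and `J` through the Cauchy-Riemann system, and in an imaginary direction
`K ⊥ J`, along which `f` only rotates `J` on a sphere, it is `K ↦ v⁻¹ K β`. Summing over the
basis gives `D f (u + vJ) = -(2/v) β(u, v)`, so `D (f - g) = 0` forces `β_f = β_g` off the real
axis. There `f` and `g` then have the same derivative, hence by continuity on all of `U`, and
`f - g` is constant on the connected open set `U`.
-/

open Quaternion Topology Filter Set
open scoped RealInnerProductSpace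

theorem Quaternion.coe_eq_smul_one (r : ℝ) : (r : ℍ[ℝ]) = r • (1 : ℍ[ℝ]) := by
  rw [← Algebra.algebraMap_eq_smul_one, Quaternion.algebraMap_def]

theorem Quaternion.hasDerivAt_coe (u : ℝ) : HasDerivAt (fun u' : ℝ => (u' : ℍ[ℝ])) 1 u := by
  simpa [← coe_eq_smul_one] using (hasDerivAt_id u).smul_const (1 : ℍ[ℝ])

theorem Quaternion.mul_self_eq_neg_one {J : ℍ[ℝ]} (hre : J.re = 0) (hn : ‖J‖ = 1) :
    J * J = -1 := by
  rw [← sq, sq_eq_neg_normSq.mpr hre, normSq_eq_norm_mul_self, hn, mul_one, coe_one]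

theorem Quaternion.dense_setOf_im_ne_zero : Dense {q : ℍ[ℝ] | q.im ≠ 0} := by
  have h : {q : ℍ[ℝ] | q.im ≠ 0} = (range ((↑) : ℝ → ℍ[ℝ]))ᶜ := by
    ext q
    refine not_congr ⟨fun hq => ⟨q.re, by rw [← re_add_im q, hq, add_zero, re_coe]⟩, ?_⟩
    rintro ⟨r, rfl⟩
    exact im_coe r
  have hcoe : ContDiff ℝ 1 ((↑) : ℝ → ℍ[ℝ]) := by
    rw [show ((↑) : ℝ → ℍ[ℝ]) = fun r => r • (1 : ℍ[ℝ]) from funext coe_eq_smul_one]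
    fun_prop
  rw [h]
  exact hcoe.dense_compl_range_of_finrank_lt_finrank (by simp [Quaternion.finrank_eq_four])

theorem Quaternion.re_coe_add_smul {u v : ℝ} {J : ℍ[ℝ]} (hJ : J.re = 0) :
    ((u : ℍ[ℝ]) + v • J).re = u := by simp [hJ]

theorem Quaternion.im_coe_add_smul {u v : ℝ} {J : ℍ[ℝ]} (hJ : J.re = 0) :
    ((u : ℍ[ℝ]) + v • J).im = v • J := by ext <;> simp [hJ]

theorem Quaternion.exists_eq_coe_add_smul (q : ℍ[ℝ]) (h : q.im ≠ 0) :
    ∃ J : ℍ[ℝ], J.re = 0 ∧ ‖J‖ = 1 ∧ q = (q.re : ℍ[ℝ]) + ‖q.im‖ • J := by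
  have hn : ‖q.im‖ ≠ 0 := norm_ne_zero_iff.mpr h
  refine ⟨‖q.im‖⁻¹ • q.im, by simp, ?_, ?_⟩
  · rw [norm_smul, norm_inv, norm_norm, inv_mul_cancel₀ hn]
  · rw [smul_inv_smul₀ hn, re_add_im]

theorem Dop_sub {f g : ℍ[ℝ] → ℍ[ℝ]} {q : ℍ[ℝ]} (hf : DifferentiableAt ℝ f q)
    (hg : DifferentiableAt ℝ g q) : Dop (fun x => f x - g x) q = Dop f q - Dop g q := by
  simp only [Dop, pd, fderiv_fun_sub hf hg, sub_apply, mul_sub]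
  abel

/-- The `-2` is `∑ eᵢ (eᵢ - ⟪J, eᵢ⟫ J) = -3 - J²`, while `∑ eᵢ ⟪J, eᵢ⟫ = J` turns the `B`-terms
into `J * B`, which cancels `L 1 = A`. -/
theorem cauchyFueter_sum {J A B C : ℍ[ℝ]} {w : ℝ} (hre : J.re = 0) (hn : ‖J‖ = 1)
    (hAB : A + J * B = 0) (L : ℍ[ℝ] → ℍ[ℝ])
    (hL : ∀ x, L x = x.re • A + ⟪J, x.im⟫ • B + w • ((x.im - ⟪J, x.im⟫ • J) * C)) :
    L 1 + e1 * L e1 + e2 * L e2 + e3 * L e3 = (-2 * w) • C := by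
  have hn2 : J.imI ^ 2 + J.imJ ^ 2 + J.imK ^ 2 = 1 := by
    have := normSq_eq_norm_mul_self J
    rw [hn, normSq_def', hre] at this
    linarith
  obtain rfl : A = -(J * B) := eq_neg_of_add_eq_zero_left hAB
  simp only [hL]
  ext <;> simp [hre, inner_def, re_mul, imI_mul, imJ_mul, imK_mul] <;> simp [e1, e2, e3] <;> grind

def IsAxiallySymmetric (U : Set ℍ[ℝ]) : Prop :=
  ∀ q ∈ U, ∀ J : ℍ[ℝ], J.re = 0 → ‖J‖ = 1 → (q.re : ℍ[ℝ]) + ‖q.im‖ • J ∈ U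

def SliceRepr (U : Set ℍ[ℝ]) (f : ℍ[ℝ] → ℍ[ℝ]) (α β : ℝ → ℝ → ℍ[ℝ]) : Prop :=
  ∀ q ∈ U, ∀ J : ℍ[ℝ], J.re = 0 → ‖J‖ = 1 → ∀ u v : ℝ,
    q = (u : ℍ[ℝ]) + v • J → f q = α u v + J * β u v

def SliceCauchyRiemann (α β : ℝ → ℝ → ℍ[ℝ]) : Prop :=
  ∀ u v : ℝ, HasDerivAt (fun u' => α u' v) (deriv (fun v' => β u v') v) u ∧
    HasDerivAt (fun u' => β u' v) (-(deriv (fun v' => α u v') v)) u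

theorem IsAxiallySymmetric.coe_add_smul_mem {U : Set ℍ[ℝ]} (hax : IsAxiallySymmetric U)
    {u v : ℝ} {J I : ℍ[ℝ]} (hv : 0 ≤ v) (hJre : J.re = 0) (hJn : ‖J‖ = 1)
    (hq : (u : ℍ[ℝ]) + v • J ∈ U) (hIre : I.re = 0) (hIn : ‖I‖ = 1) :
    (u : ℍ[ℝ]) + v • I ∈ U := by
  simpa [re_coe_add_smul hJre, im_coe_add_smul hJre, norm_smul, hJn, abs_of_nonneg hv] using
    hax _ hq I hIre hIn

namespace SliceRepr

variable {U : Set ℍ[ℝ]} {f : ℍ[ℝ] → ℍ[ℝ]} {α β : ℝ → ℝ → ℍ[ℝ]} {u v : ℝ} {J : ℍ[ℝ]}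

theorem differentiableAt_components (hrep : SliceRepr U f α β) (hU : IsOpen U)
    (hf : DifferentiableOn ℝ f U) (hJre : J.re = 0) (hJn : ‖J‖ = 1)
    (hq : (u : ℍ[ℝ]) + v • J ∈ U) (hq' : (u : ℍ[ℝ]) + v • -J ∈ U) :
    DifferentiableAt ℝ (α u ·) v ∧ DifferentiableAt ℝ (β u ·) v := by
  have hslice : ∀ I : ℍ[ℝ], (u : ℍ[ℝ]) + v • I ∈ U →
      DifferentiableAt ℝ (fun v' : ℝ => f ((u : ℍ[ℝ]) + v' • I)) v ∧
      ∀ᶠ v' in 𝓝 v, (u : ℍ[ℝ]) + v' • I ∈ U := fun I hI =>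
    ⟨(hf.differentiableAt (hU.mem_nhds hI)).comp v (by fun_prop),
      (by fun_prop : Continuous fun v' : ℝ => (u : ℍ[ℝ]) + v' • I).continuousAt.eventually_mem
        (hU.mem_nhds hI)⟩
  obtain ⟨hF, hFU⟩ := hslice J hq
  obtain ⟨hG, hGU⟩ := hslice (-J) hq'
  have hrepJ : ∀ᶠ v' in 𝓝 v, f ((u : ℍ[ℝ]) + v' • J) = α u v' + J * β u v' := by
    filter_upwards [hFU] with v' hv' using hrep _ hv' J hJre hJn u v' rfl
  have hrepJ' : ∀ᶠ v' in 𝓝 v, f ((u : ℍ[ℝ]) + v' • -J) = α u v' - J * β u v' := by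
    filter_upwards [hGU] with v' hv'
    rw [hrep _ hv' (-J) (by simp [hJre]) (by simpa using hJn) u v' rfl, neg_mul, sub_eq_add_neg]
  -- `f` at `u ± vJ` recovers `α` and `β` as its even and odd parts
  constructor
  · refine ((hF.add hG).const_smul (2⁻¹ : ℝ)).congr_of_eventuallyEq ?_
    filter_upwards [hrepJ, hrepJ'] with v' h h'
    simp only [Pi.smul_apply, Pi.add_apply, h, h']
    module
  · refine (((hF.sub hG).const_mul (-J)).const_smul (2⁻¹ : ℝ)).congr_of_eventuallyEq ?_
    filter_upwards [hrepJ, hrepJ'] with v' h h'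
    simp only [Pi.smul_apply, Pi.sub_apply, h, h']
    rw [add_sub_sub_cancel, ← two_smul ℝ, mul_smul_comm, ← mul_assoc, neg_mul,
      mul_self_eq_neg_one hJre hJn, neg_neg, one_mul, smul_smul]
    norm_num

theorem fderiv_apply_one (hrep : SliceRepr U f α β) (hCR : SliceCauchyRiemann α β)
    (hU : IsOpen U) (hf : DifferentiableAt ℝ f ((u : ℍ[ℝ]) + v • J)) (hJre : J.re = 0)
    (hJn : ‖J‖ = 1) (hq : (u : ℍ[ℝ]) + v • J ∈ U) :
    fderiv ℝ f ((u : ℍ[ℝ]) + v • J) 1 = deriv (β u ·) v + J * deriv (β · v) u := by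
  have hγ : HasDerivAt (fun u' : ℝ => (u' : ℍ[ℝ]) + v • J) 1 u := (hasDerivAt_coe u).add_const _
  have hrepu : ∀ᶠ u' : ℝ in 𝓝 u, f ((u' : ℍ[ℝ]) + v • J) = α u' v + J * β u' v := by
    filter_upwards [hγ.continuousAt.eventually_mem (hU.mem_nhds hq)] with u' hu'
    exact hrep _ hu' J hJre hJn u' v rfl
  refine (hf.hasFDerivAt.comp_hasDerivAt u hγ).unique ?_
  exact ((hCR u v).1.add ((hCR u v).2.differentiableAt.hasDerivAt.const_mul J))
    |>.congr_of_eventuallyEq hrepu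

theorem fderiv_apply_self (hrep : SliceRepr U f α β) (hCR : SliceCauchyRiemann α β)
    (hU : IsOpen U) (hf : DifferentiableOn ℝ f U) (hJre : J.re = 0) (hJn : ‖J‖ = 1)
    (hq : (u : ℍ[ℝ]) + v • J ∈ U) (hq' : (u : ℍ[ℝ]) + v • -J ∈ U) :
    fderiv ℝ f ((u : ℍ[ℝ]) + v • J) J = -deriv (β · v) u + J * deriv (β u ·) v := by
  obtain ⟨hα, hβ⟩ := hrep.differentiableAt_components hU hf hJre hJn hq hq'
  have hγ : HasDerivAt (fun v' : ℝ => (u : ℍ[ℝ]) + v' • J) J v := by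
    simpa using ((hasDerivAt_id v).smul_const J).const_add (u : ℍ[ℝ])
  have hrepv : ∀ᶠ v' : ℝ in 𝓝 v, f ((u : ℍ[ℝ]) + v' • J) = α u v' + J * β u v' := by
    filter_upwards [hγ.continuousAt.eventually_mem (hU.mem_nhds hq)] with v' hv'
    exact hrep _ hv' J hJre hJn u v' rfl
  rw [(hCR u v).2.deriv, neg_neg]
  refine ((hf.differentiableAt (hU.mem_nhds hq)).hasFDerivAt.comp_hasDerivAt v hγ).unique ?_
  exact (hα.hasDerivAt.add (hβ.hasDerivAt.const_mul J)).congr_of_eventuallyEq hrepv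

/-- Along the great circle `t ↦ u + v (cos t • J + sin t • K)` only the imaginary unit of the
slice moves, so `f = α u v + R t * β u v` there with `α u v`, `β u v` fixed. -/
theorem fderiv_apply_smul_of_orthogonal (hrep : SliceRepr U f α β) (hU : IsOpen U)
    (hf : DifferentiableAt ℝ f ((u : ℍ[ℝ]) + v • J)) (hJre : J.re = 0) (hJn : ‖J‖ = 1)
    {K : ℍ[ℝ]} (hKre : K.re = 0) (hKn : ‖K‖ = 1) (hJK : ⟪J, K⟫ = 0)
    (hq : (u : ℍ[ℝ]) + v • J ∈ U) :
    fderiv ℝ f ((u : ℍ[ℝ]) + v • J) (v • K) = K * β u v := by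
  set R : ℝ → ℍ[ℝ] := fun t => Real.cos t • J + Real.sin t • K
  have hR : HasDerivAt R K 0 := by
    simpa using
      ((Real.hasDerivAt_cos 0).smul_const J).fun_add ((Real.hasDerivAt_sin 0).smul_const K)
  have hRre : ∀ t, (R t).re = 0 := fun t => by simp [R, hJre, hKre]
  have hRn : ∀ t, ‖R t‖ = 1 := fun t => by
    have h : ‖R t‖ ^ 2 = 1 := by
      rw [norm_add_sq_real, real_inner_smul_left, real_inner_smul_right, hJK, norm_smul,
        norm_smul, hJn, hKn]
      simp [Real.cos_sq_add_sin_sq]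
    exact (pow_eq_one_iff_of_nonneg (norm_nonneg _) two_ne_zero).mp h
  have hγ : HasDerivAt (fun t => (u : ℍ[ℝ]) + v • R t) (v • K) 0 := (hR.const_smul v).const_add _
  have hγ0 : (u : ℍ[ℝ]) + v • R 0 = (u : ℍ[ℝ]) + v • J := by simp [R]
  have hrepγ : ∀ᶠ t in 𝓝 0, f ((u : ℍ[ℝ]) + v • R t) = α u v + R t * β u v := by
    filter_upwards [hγ.continuousAt.eventually_mem (hU.mem_nhds (hγ0 ▸ hq))] with t ht
    exact hrep _ ht _ (hRre t) (hRn t) u v rfl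
  have hf' : HasFDerivAt f (fderiv ℝ f ((u : ℍ[ℝ]) + v • J)) ((u : ℍ[ℝ]) + v • R 0) := by
    rw [hγ0]; exact hf.hasFDerivAt
  refine (hf'.comp_hasDerivAt 0 hγ).unique ?_
  exact ((hR.mul_const (β u v)).const_add (α u v)).congr_of_eventuallyEq hrepγ

theorem fderiv_apply_of_orthogonal (hrep : SliceRepr U f α β) (hU : IsOpen U)
    (hf : DifferentiableAt ℝ f ((u : ℍ[ℝ]) + v • J)) (hJre : J.re = 0) (hJn : ‖J‖ = 1)
    (hv : v ≠ 0) {K : ℍ[ℝ]} (hKre : K.re = 0) (hJK : ⟪J, K⟫ = 0)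
    (hq : (u : ℍ[ℝ]) + v • J ∈ U) :
    fderiv ℝ f ((u : ℍ[ℝ]) + v • J) K = v⁻¹ • (K * β u v) := by
  obtain rfl | hK := eq_or_ne K 0
  · simp
  have hn : ‖K‖ ≠ 0 := norm_ne_zero_iff.mpr hK
  have h := hrep.fderiv_apply_smul_of_orthogonal hU hf hJre hJn (K := ‖K‖⁻¹ • K)
    (by simp [hKre]) (norm_smul_inv_norm hK) (by rw [real_inner_smul_right, hJK, mul_zero]) hq
  have hK' : K = (‖K‖ * v⁻¹) • v • ‖K‖⁻¹ • K := by
    rw [smul_smul, smul_smul, show ‖K‖ * v⁻¹ * v * ‖K‖⁻¹ = 1 by field_simp, one_smul]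
  conv_lhs => rw [hK', map_smul, h]
  rw [smul_mul_assoc, smul_smul, mul_comm ‖K‖, mul_assoc, mul_inv_cancel₀ hn, mul_one]

theorem fderiv_apply (hrep : SliceRepr U f α β) (hCR : SliceCauchyRiemann α β) (hU : IsOpen U)
    (hax : IsAxiallySymmetric U) (hf : DifferentiableOn ℝ f U) (hJre : J.re = 0) (hJn : ‖J‖ = 1)
    (hv : 0 < v) (hq : (u : ℍ[ℝ]) + v • J ∈ U) (x : ℍ[ℝ]) :
    fderiv ℝ f ((u : ℍ[ℝ]) + v • J) x =
      x.re • (deriv (β u ·) v + J * deriv (β · v) u) +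
        ⟪J, x.im⟫ • (-deriv (β · v) u + J * deriv (β u ·) v) +
        v⁻¹ • ((x.im - ⟪J, x.im⟫ • J) * β u v) := by
  set P := x.im - ⟪J, x.im⟫ • J
  have hx : x = x.re • (1 : ℍ[ℝ]) + ⟪J, x.im⟫ • J + P := by
    rw [add_assoc, add_sub_cancel, ← coe_eq_smul_one, re_add_im]
  have hPre : P.re = 0 := by simp [P, hJre]
  have hJP : ⟪J, P⟫ = 0 := by
    simp [P, inner_sub_right, real_inner_smul_right, hJn]
  have hfq := hf.differentiableAt (hU.mem_nhds hq)
  have hq' := hax.coe_add_smul_mem hv.le hJre hJn hq (I := -J) (by simp [hJre]) (by simpa using hJn)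
  conv_lhs => rw [hx]
  rw [map_add, map_add, map_smul, map_smul, hrep.fderiv_apply_one hCR hU hfq hJre hJn hq,
    hrep.fderiv_apply_self hCR hU hf hJre hJn hq hq',
    hrep.fderiv_apply_of_orthogonal hU hfq hJre hJn hv.ne' hPre hJP hq]

theorem Dop_eq (hrep : SliceRepr U f α β) (hCR : SliceCauchyRiemann α β) (hU : IsOpen U)
    (hax : IsAxiallySymmetric U) (hf : DifferentiableOn ℝ f U) (hJre : J.re = 0) (hJn : ‖J‖ = 1)
    (hv : 0 < v) (hq : (u : ℍ[ℝ]) + v • J ∈ U) :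
    Dop f ((u : ℍ[ℝ]) + v • J) = (-2 * v⁻¹) • β u v :=
  cauchyFueter_sum hJre hJn
    (by rw [mul_add, mul_neg, ← mul_assoc, mul_self_eq_neg_one hJre hJn]; noncomm_ring) _
    (hrep.fderiv_apply hCR hU hax hf hJre hJn hv hq)

theorem fderiv_eq_of_beta_eq {g : ℍ[ℝ] → ℍ[ℝ]} {α' β' : ℝ → ℝ → ℍ[ℝ]} (hrep : SliceRepr U f α β)
    (hrep' : SliceRepr U g α' β') (hCR : SliceCauchyRiemann α β)
    (hCR' : SliceCauchyRiemann α' β') (hU : IsOpen U) (hax : IsAxiallySymmetric U)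
    (hf : DifferentiableOn ℝ f U) (hg : DifferentiableOn ℝ g U) (hJre : J.re = 0)
    (hJn : ‖J‖ = 1) (hv : 0 < v) (hq : (u : ℍ[ℝ]) + v • J ∈ U)
    (hβ : ∀ u' v' : ℝ, 0 < v' → (u' : ℍ[ℝ]) + v' • J ∈ U → β u' v' = β' u' v') :
    fderiv ℝ f ((u : ℍ[ℝ]) + v • J) = fderiv ℝ g ((u : ℍ[ℝ]) + v • J) := by
  have hu : deriv (β · v) u = deriv (β' · v) u := by
    refine EventuallyEq.deriv_eq ?_
    have hγ : Continuous fun u' : ℝ => (u' : ℍ[ℝ]) + v • J := continuous_coe.add continuous_const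
    filter_upwards [hγ.continuousAt.eventually_mem (hU.mem_nhds hq)] with u' hu'
    exact hβ u' v hv hu'
  have hv' : deriv (β u ·) v = deriv (β' u ·) v := by
    refine EventuallyEq.deriv_eq ?_
    have hγ : Continuous fun v' : ℝ => (u : ℍ[ℝ]) + v' • J := by fun_prop
    filter_upwards [eventually_gt_nhds hv, hγ.continuousAt.eventually_mem (hU.mem_nhds hq)]
      with v' hv' hv'U
    exact hβ u v' hv' hv'U
  ext1 x
  rw [hrep.fderiv_apply hCR hU hax hf hJre hJn hv hq,
    hrep'.fderiv_apply hCR' hU hax hg hJre hJn hv hq, hu, hv', hβ u v hv hq]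

end SliceRepr

theorem D_kernel_slice_const_general (U : Set ℍ[ℝ]) (hU : IsOpen U) (hconn : IsConnected U)
    (hax : ∀ q ∈ U, ∀ J : ℍ[ℝ], J.re = 0 → ‖J‖ = 1 → (q.re : ℍ[ℝ]) + ‖q.im‖ • J ∈ U)
    (f g : ℍ[ℝ] → ℍ[ℝ])
    (hf : ContDiffOn ℝ 1 f U) (hg : ContDiffOn ℝ 1 g U)
    (hshf : IsSliceHyp U f) (hshg : IsSliceHyp U g)
    (hD : ∀ q ∈ U, Dop (fun x => f x - g x) q = 0) :
    ∃ c : ℍ[ℝ], ∀ q ∈ U, f q - g q = c := by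
  obtain ⟨αf, βf, -, hCRf : SliceCauchyRiemann αf βf, hrepf : SliceRepr U f αf βf⟩ := hshf
  obtain ⟨αg, βg, -, hCRg : SliceCauchyRiemann αg βg, hrepg : SliceRepr U g αg βg⟩ := hshg
  have hfd : DifferentiableOn ℝ f U := hf.differentiableOn one_ne_zero
  have hgd : DifferentiableOn ℝ g U := hg.differentiableOn one_ne_zero
  have hβ : ∀ {J : ℍ[ℝ]}, J.re = 0 → ‖J‖ = 1 → ∀ u v : ℝ, 0 < v → (u : ℍ[ℝ]) + v • J ∈ U →
      βf u v = βg u v := by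
    intro J hJre hJn u v hv hq
    have h := hD _ hq
    rw [Dop_sub (hfd.differentiableAt (hU.mem_nhds hq)) (hgd.differentiableAt (hU.mem_nhds hq)),
      hrepf.Dop_eq hCRf hU hax hfd hJre hJn hv hq, hrepg.Dop_eq hCRg hU hax hgd hJre hJn hv hq,
      ← smul_sub, smul_eq_zero] at h
    exact sub_eq_zero.mp (h.resolve_left (by simp [hv.ne']))
  have hoff : ∀ q ∈ U, q.im ≠ 0 → fderiv ℝ (fun x => f x - g x) q = 0 := by
    intro q hq him
    obtain ⟨J, hJre, hJn, hqJ⟩ := exists_eq_coe_add_smul q him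
    rw [fderiv_fun_sub (hfd.differentiableAt (hU.mem_nhds hq))
      (hgd.differentiableAt (hU.mem_nhds hq)), sub_eq_zero, hqJ]
    rw [hqJ] at hq
    exact hrepf.fderiv_eq_of_beta_eq hrepg hCRf hCRg hU hax hfd hgd hJre hJn (norm_pos_iff.mpr him)
      hq (hβ hJre hJn)
  have hzero : EqOn (fderiv ℝ (fun x => f x - g x)) 0 U :=
    EqOn.of_subset_closure (fun q hq => hoff q hq.1 hq.2)
      ((hf.sub hg).continuousOn_fderiv_of_isOpen hU le_rfl) continuousOn_const inter_subset_left
      (dense_setOf_im_ne_zero.open_subset_closure_inter hU)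
  exact hU.exists_is_const_of_fderiv_eq_zero hconn.isPreconnected (hfd.sub hgd) hzero

theorem D_kernel_slice_const (U : Set ℍ[ℝ]) (hU : IsOpen U) (hconn : IsConnected U)
    (hreal : ∃ r : ℝ, (r : ℍ[ℝ]) ∈ U)
    (hax : ∀ q ∈ U, ∀ J : ℍ[ℝ], J.re = 0 → ‖J‖ = 1 → (q.re : ℍ[ℝ]) + ‖q.im‖ • J ∈ U)
    (f g : ℍ[ℝ] → ℍ[ℝ])
    (hf : ContDiffOn ℝ 1 f U) (hg : ContDiffOn ℝ 1 g U)
    (hshf : IsSliceHyp U f) (hshg : IsSliceHyp U g)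
    (hD : ∀ q ∈ U, Dop (fun x => f x - g x) q = 0) :
    ∃ c : ℍ[ℝ], ∀ q ∈ U, f q - g q = c :=
  D_kernel_slice_const_general U hU hconn hax f g hf hg hshf hshg hD
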